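/- For every α ∈ C^i(X, F₂) on a finite pure d-dimensional homogeneous simplicial complex X, there exists a locally minimal α′ ∈ C^i(X, F₂) with α′ ≡ α (mod B^i(X, F₂)) and ||α′|| ≤ ||α||. -/

import Mathlib

/-!
Take `α′` of least norm in the (finite) coset `α + B^i(X)`; then `‖α′‖ ≤ ‖α‖` trivially, and
`α′` turns out to be locally minimal. Fix a vertex `v`. Every `(i-1)`-coboundary `δβ` of the link
`X_v` is the localization at `v` of the `i`-coboundary `δ(v * β)` of the cone over `β` (for
`i = 1`, of `δ{v}`), and all faces of `δ(v * β)` contain `v`. For `σ ∋ v` the weights satisfy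
`w(σ) = K_v · w_v(σ ∖ v)` with a constant `K_v > 0`, so adding `δ(v * β)` to `α′` leaves the faces
avoiding `v` alone and changes the norm by `K_v (‖α′_v + δβ‖ - ‖α′_v‖)`. Global minimality of `α′`
thus forces `α′_v` to be minimal in `X_v`.
-/

open Finset

variable {V : Type*}

/-- The `i`-dimensional faces of `X` (faces with `i+1` vertices). -/
def faces [DecidableEq V] (X : Finset (Finset V)) (i : ℕ) : Finset (Finset V) :=
  X.filter fun s => s.card = i + 1

/-- `X` is a simplicial complex: it is closed under taking subsets. -/
def IsComplex [DecidableEq V] (X : Finset (Finset V)) : Prop :=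
  ∀ s ∈ X, ∀ t ⊆ s, t ∈ X

/-- `X` is pure of dimension `d`: every face is contained in a `d`-dimensional face. -/
def IsPure [DecidableEq V] (X : Finset (Finset V)) (d : ℕ) : Prop :=
  ∀ s ∈ X, ∃ t ∈ faces X d, s ⊆ t

/-- `c(σ)`: the number of `d`-dimensional faces of `X` containing `σ`. -/
def cnt [DecidableEq V] (X : Finset (Finset V)) (d : ℕ) (σ : Finset V) : ℕ :=
  ((faces X d).filter fun τ => σ ⊆ τ).card

/-- The weight `w(σ) = c(σ)/(C(d+1,i+1)·|X(d)|)` of an `i`-face `σ`. -/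
noncomputable def wt [DecidableEq V] (X : Finset (Finset V)) (d i : ℕ) (σ : Finset V) : ℝ :=
  (cnt X d σ : ℝ) / ((((d + 1).choose (i + 1)) : ℝ) * ((faces X d).card : ℝ))

/-- The weighted norm of an `F₂` `i`-cochain, identified with its support. -/
noncomputable def cnorm [DecidableEq V] (X : Finset (Finset V)) (d i : ℕ)
    (α : Finset (Finset V)) : ℝ :=
  ∑ σ ∈ α, wt X d i σ

/-- The `F₂`-coboundary of an `i`-cochain `α` (identified with its support): the set of
`(i+1)`-faces containing an odd number of `i`-faces from `α`. -/
def coboundary [DecidableEq V] (X : Finset (Finset V)) (i : ℕ)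
    (α : Finset (Finset V)) : Finset (Finset V) :=
  (faces X (i + 1)).filter fun σ => ((σ.powersetCard (i + 1)).filter (· ∈ α)).card % 2 = 1

/-- The link of a vertex `v` in `X`. -/
def link [DecidableEq V] (X : Finset (Finset V)) (v : V) : Finset (Finset V) :=
  (X.filter fun s => v ∈ s).image fun s => s.erase v

/-- The localization `α_v` of a cochain `α` at the vertex `v`. -/
def loc [DecidableEq V] (α : Finset (Finset V)) (v : V) : Finset (Finset V) :=
  (α.filter fun s => v ∈ s).image fun s => s.erase v

/-- `β` is an `i`-coboundary, i.e. `β ∈ B^i(X, F₂)`; for `i = 0` these are the images of the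
reduced coboundary map `δ₋₁ : F₂ → C⁰`, namely `0` and the all-ones cochain. -/
def IsCoboundarySet [DecidableEq V] (X : Finset (Finset V)) : ℕ → Finset (Finset V) → Prop
  | 0, β => β = ∅ ∨ β = faces X 0
  | i + 1, β => ∃ γ ⊆ faces X i, β = coboundary X i γ

/-- `β` is a minimal `i`-cochain: it has minimal weighted norm in its coset mod `B^i`. -/
def IsMinimal [DecidableEq V] (X : Finset (Finset V)) (d i : ℕ)
    (β : Finset (Finset V)) : Prop :=
  ∀ γ : Finset (Finset V), IsCoboundarySet X i γ → cnorm X d i β ≤ cnorm X d i (symmDiff β γ)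

/-- `α ∈ C^i(X,F₂)` is locally minimal: for every vertex `v`, the localization `α_v` is a
minimal `(i-1)`-cochain of the link `X_v` (a pure `(d-1)`-dimensional complex). -/
def LocallyMinimal [DecidableEq V] (X : Finset (Finset V)) (d i : ℕ)
    (α : Finset (Finset V)) : Prop :=
  ∀ v : V, IsMinimal (link X v) (d - 1) (i - 1) (loc α v)

section LocalMinimality

variable [DecidableEq V]

lemma mem_loc {α : Finset (Finset V)} {v : V} {τ : Finset V} :
    τ ∈ loc α v ↔ v ∉ τ ∧ insert v τ ∈ α := by
  simp only [loc, mem_image, mem_filter]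
  constructor
  · rintro ⟨s, ⟨hs, hv⟩, rfl⟩
    exact ⟨notMem_erase _ _, by rwa [insert_erase hv]⟩
  · rintro ⟨hv, hs⟩
    exact ⟨insert v τ, ⟨hs, mem_insert_self _ _⟩, erase_insert hv⟩

lemma loc_symmDiff (α β : Finset (Finset V)) (v : V) :
    loc (symmDiff α β) v = symmDiff (loc α v) (loc β v) := by
  ext τ
  simp only [mem_loc, mem_symmDiff]
  tauto

lemma mem_faces {X : Finset (Finset V)} {i : ℕ} {s : Finset V} :
    s ∈ faces X i ↔ s ∈ X ∧ #s = i + 1 := mem_filter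

lemma mem_faces_link {X : Finset (Finset V)} {v : V} {k : ℕ} {τ : Finset V} :
    τ ∈ faces (link X v) k ↔ v ∉ τ ∧ insert v τ ∈ faces X (k + 1) := by
  rw [mem_faces, mem_faces, show link X v = loc X v from rfl, mem_loc]
  constructor
  · rintro ⟨⟨hv, hX⟩, hcard⟩
    exact ⟨hv, hX, by rw [card_insert_of_notMem hv, hcard]⟩
  · rintro ⟨hv, hX, hcard⟩
    rw [card_insert_of_notMem hv] at hcard
    exact ⟨⟨hv, hX⟩, by omega⟩

lemma faces_link_nonempty {X : Finset (Finset V)} {e : ℕ} (hX : IsPure X (e + 1)) {v : V}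
    (hv : {v} ∈ X) : (faces (link X v) e).Nonempty := by
  obtain ⟨t, ht, hvt⟩ := hX {v} hv
  have hvt : v ∈ t := singleton_subset_iff.mp hvt
  refine ⟨t.erase v, mem_faces_link.mpr ⟨notMem_erase v t, ?_⟩⟩
  rwa [insert_erase hvt]

lemma card_symmDiff_mod_two {α : Type*} [DecidableEq α] (s t : Finset α) :
    #(symmDiff s t) % 2 = (#s + #t) % 2 := by
  rw [symmDiff_eq_sup_sdiff_inf, sup_eq_union, inf_eq_inter,
    card_sdiff_of_subset inter_subset_union, ← card_union_add_card_inter s t]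
  have := card_le_card (inter_subset_union (s := s) (t := t))
  omega

lemma mem_coboundary {X : Finset (Finset V)} {i : ℕ} {α : Finset (Finset V)} {σ : Finset V} :
    σ ∈ coboundary X i α ↔
      σ ∈ faces X (i + 1) ∧ #((σ.powersetCard (i + 1)).filter (· ∈ α)) % 2 = 1 := mem_filter

lemma coboundary_empty (X : Finset (Finset V)) (i : ℕ) : coboundary X i ∅ = ∅ := by
  ext σ
  simp [coboundary]

lemma coboundary_symmDiff (X : Finset (Finset V)) (i : ℕ) (α β : Finset (Finset V)) :
    coboundary X i (symmDiff α β) = symmDiff (coboundary X i α) (coboundary X i β) := by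
  ext σ
  have hfilter : (σ.powersetCard (i + 1)).filter (· ∈ symmDiff α β)
      = symmDiff ((σ.powersetCard (i + 1)).filter (· ∈ α))
          ((σ.powersetCard (i + 1)).filter (· ∈ β)) := by
    ext s
    simp only [mem_filter, mem_symmDiff]
    tauto
  rw [mem_symmDiff, mem_coboundary, mem_coboundary, mem_coboundary, hfilter,
    card_symmDiff_mod_two]
  by_cases hσ : σ ∈ faces X (i + 1)
  · simp only [hσ, true_and]
    omega
  · simp [hσ]

lemma isCoboundarySet_empty (X : Finset (Finset V)) (i : ℕ) : IsCoboundarySet X i ∅ := by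
  cases i with
  | zero => exact Or.inl rfl
  | succ i => exact ⟨∅, empty_subset _, (coboundary_empty X i).symm⟩

lemma IsCoboundarySet.subset_faces {X : Finset (Finset V)} {i : ℕ} {γ : Finset (Finset V)}
    (hγ : IsCoboundarySet X i γ) : γ ⊆ faces X i := by
  cases i with
  | zero => rcases hγ with rfl | rfl <;> simp
  | succ i =>
    obtain ⟨β, -, rfl⟩ := hγ
    exact filter_subset _ _

lemma IsCoboundarySet.symmDiff {X : Finset (Finset V)} {i : ℕ} {γ γ' : Finset (Finset V)}
    (hγ : IsCoboundarySet X i γ) (hγ' : IsCoboundarySet X i γ') :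
    IsCoboundarySet X i (symmDiff γ γ') := by
  cases i with
  | zero => rcases hγ with rfl | rfl <;> rcases hγ' with rfl | rfl <;> simp [IsCoboundarySet]
  | succ i =>
    obtain ⟨β, hβ, rfl⟩ := hγ
    obtain ⟨β', hβ', rfl⟩ := hγ'
    exact ⟨_, symmDiff_le_sup.trans (union_subset hβ hβ'), (coboundary_symmDiff X i β β').symm⟩

lemma exists_isMinimal_symmDiff (X : Finset (Finset V)) (d i : ℕ) {α : Finset (Finset V)}
    (hα : α ⊆ faces X i) :
    ∃ γ, IsCoboundarySet X i γ ∧ symmDiff α γ ⊆ faces X i ∧ IsMinimal X d i (symmDiff α γ) := by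
  classical
  obtain ⟨γ, hγ, hmin⟩ := ((faces X i).powerset.filter (IsCoboundarySet X i)).exists_min_image
    (fun γ => cnorm X d i (symmDiff α γ))
    ⟨∅, mem_filter.mpr ⟨empty_mem_powerset _, isCoboundarySet_empty X i⟩⟩
  have hγ : IsCoboundarySet X i γ := (mem_filter.mp hγ).2
  refine ⟨γ, hγ, symmDiff_le_sup.trans (union_subset hα hγ.subset_faces), fun γ' hγ' => ?_⟩
  rw [symmDiff_assoc]
  have hγγ' := hγ.symmDiff hγ'
  exact hmin _ (mem_filter.mpr ⟨mem_powerset.mpr hγγ'.subset_faces, hγγ'⟩)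

lemma cnt_link_erase (X : Finset (Finset V)) {v : V} {σ : Finset V} (hv : v ∈ σ) (e : ℕ) :
    cnt (link X v) e (σ.erase v) = cnt X (e + 1) σ := by
  refine card_nbij' (insert v) (fun τ => τ.erase v) ?_ ?_ ?_ ?_
  · intro ρ hρ
    simp only [coe_filter, Set.mem_ofPred_eq, mem_faces_link] at hρ ⊢
    refine ⟨hρ.1.2, fun x hx => ?_⟩
    rcases eq_or_ne x v with rfl | hxv
    · exact mem_insert_self _ _
    · exact mem_insert_of_mem (hρ.2 (mem_erase.mpr ⟨hxv, hx⟩))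
  · intro τ hτ
    simp only [coe_filter, Set.mem_ofPred_eq, mem_faces_link] at hτ ⊢
    rw [insert_erase (hτ.2 hv)]
    exact ⟨⟨notMem_erase v τ, hτ.1⟩, erase_subset_erase v hτ.2⟩
  · intro ρ hρ
    simp only [coe_filter, Set.mem_ofPred_eq, mem_faces_link] at hρ
    exact erase_insert hρ.1.1
  · intro τ hτ
    simp only [coe_filter, Set.mem_ofPred_eq] at hτ
    exact insert_erase (hτ.2 hv)

/-- The factor `K_v` with `w(σ) = K_v · w_v(σ ∖ v)` for `σ ∋ v`, written for `d = e + 1` and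
`i = j + 1`. -/
noncomputable def linkScale (X : Finset (Finset V)) (v : V) (e j : ℕ) : ℝ :=
  ((e + 1).choose (j + 1) * #(faces (link X v) e)) / ((e + 2).choose (j + 2) * #(faces X (e + 1)))

lemma linkScale_pos {X : Finset (Finset V)} {v : V} {e j : ℕ} (hje : j ≤ e)
    (hm : (faces (link X v) e).Nonempty) : 0 < linkScale X v e j := by
  obtain ⟨τ, hτ⟩ := hm
  have hN : 0 < #(faces X (e + 1)) := card_pos.mpr ⟨_, (mem_faces_link.mp hτ).2⟩
  have hlink : 0 < #(faces (link X v) e) := card_pos.mpr ⟨τ, hτ⟩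
  have h₁ : 0 < (e + 1).choose (j + 1) := Nat.choose_pos (by omega)
  have h₂ : 0 < (e + 2).choose (j + 2) := Nat.choose_pos (by omega)
  unfold linkScale
  positivity

lemma wt_eq_linkScale_mul {X : Finset (Finset V)} {v : V} {σ : Finset V} (hv : v ∈ σ) {e j : ℕ}
    (hje : j ≤ e) (hm : (faces (link X v) e).Nonempty) :
    wt X (e + 1) (j + 1) σ = linkScale X v e j * wt (link X v) e j (σ.erase v) := by
  have h₁ : 0 < (e + 1).choose (j + 1) := Nat.choose_pos (by omega)
  have hC : ((e + 1).choose (j + 1) : ℝ) * #(faces (link X v) e) ≠ 0 := by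
    have := hm.card_pos
    positivity
  rw [wt, wt, linkScale, cnt_link_erase X hv, div_mul_div_comm, mul_comm _ (cnt X (e + 1) σ : ℝ),
    mul_div_mul_right _ _ hC]

lemma cnorm_eq_add_linkScale_mul {X : Finset (Finset V)} (v : V) {e j : ℕ} (hje : j ≤ e)
    (hm : (faces (link X v) e).Nonempty) (α : Finset (Finset V)) :
    cnorm X (e + 1) (j + 1) α = ∑ σ ∈ α with v ∉ σ, wt X (e + 1) (j + 1) σ
      + linkScale X v e j * cnorm (link X v) e j (loc α v) := by
  rw [cnorm, ← sum_filter_not_add_sum_filter α (v ∈ ·), cnorm, loc, mul_sum, sum_image]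
  · congr 1
    exact sum_congr rfl fun σ hσ => wt_eq_linkScale_mul (mem_filter.mp hσ).2 hje hm
  · intro σ hσ τ hτ (hστ : σ.erase v = τ.erase v)
    rw [mem_coe, mem_filter] at hσ hτ
    rw [← insert_erase hσ.2, hστ, insert_erase hτ.2]

lemma card_filter_powersetCard_insert {v : V} {β : Finset (Finset V)} (hβ : ∀ b ∈ β, v ∉ b)
    (τ : Finset V) (n : ℕ) :
    #(((insert v τ).powersetCard (n + 1)).filter (· ∈ β.image (insert v)))
      = #((τ.powersetCard n).filter (· ∈ β)) := by
  have himage : ((insert v τ).powersetCard (n + 1)).filter (· ∈ β.image (insert v))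
      = ((τ.powersetCard n).filter (· ∈ β)).image (insert v) := by
    ext ρ
    simp only [mem_filter, mem_powersetCard, mem_image]
    constructor
    · rintro ⟨⟨hρτ, hcard⟩, b, hb, rfl⟩
      rw [card_insert_of_notMem (hβ b hb)] at hcard
      refine ⟨b, ⟨⟨fun x hx => ?_, by omega⟩, hb⟩, rfl⟩
      exact (mem_insert.mp (hρτ (mem_insert_of_mem hx))).resolve_left
        (fun h => hβ b hb (h ▸ hx))
    · rintro ⟨b, ⟨⟨hbτ, hcard⟩, hb⟩, rfl⟩
      exact ⟨⟨insert_subset_insert v hbτ, by rw [card_insert_of_notMem (hβ b hb), hcard]⟩,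
        b, hb, rfl⟩
  rw [himage, card_image_of_injOn]
  intro b hb b' hb' h
  simp only [coe_filter, mem_powersetCard, Set.mem_ofPred_eq] at hb hb'
  rw [← erase_insert (hβ b hb.2), h, erase_insert (hβ b' hb'.2)]

lemma mem_of_mem_coboundary_image_insert {X : Finset (Finset V)} {j : ℕ} {v : V}
    {β : Finset (Finset V)} {σ : Finset V} (hσ : σ ∈ coboundary X j (β.image (insert v))) :
    v ∈ σ := by
  have hodd := (mem_coboundary.mp hσ).2
  obtain ⟨ρ, hρ⟩ := card_pos.mp (by omega :
    0 < #((σ.powersetCard (j + 1)).filter (· ∈ β.image (insert v))))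
  simp only [mem_filter, mem_powersetCard, mem_image] at hρ
  obtain ⟨⟨hρσ, -⟩, b, -, rfl⟩ := hρ
  exact hρσ (mem_insert_self v b)

/-- `β.image (insert v)` is the cone `v * β`. Stated for every `j`, so that the case `j = 0`
(the cone `{v}` over `β = {∅}`) is covered too. -/
lemma loc_coboundary_image_insert (X : Finset (Finset V)) (j : ℕ) {v : V}
    {β : Finset (Finset V)} (hβ : ∀ b ∈ β, v ∉ b) :
    loc (coboundary X j (β.image (insert v))) v
      = (faces (link X v) j).filter fun τ => #((τ.powersetCard j).filter (· ∈ β)) % 2 = 1 := by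
  ext τ
  rw [mem_loc, mem_coboundary, mem_filter, mem_faces_link, card_filter_powersetCard_insert hβ]
  tauto

lemma exists_coboundary_loc_eq {X : Finset (Finset V)} {v : V} (hv : {v} ∈ X) {j : ℕ}
    {γ : Finset (Finset V)} (hγ : IsCoboundarySet (link X v) j γ) :
    ∃ Γ, IsCoboundarySet X (j + 1) Γ ∧ (∀ σ ∈ Γ, v ∈ σ) ∧ loc Γ v = γ := by
  cases j with
  | zero =>
    rcases hγ with rfl | rfl
    · exact ⟨∅, isCoboundarySet_empty X 1, by simp, by simp [loc]⟩
    · refine ⟨coboundary X 0 (({∅} : Finset (Finset V)).image (insert v)),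
        ⟨_, by simpa [mem_faces] using hv, rfl⟩, fun σ => mem_of_mem_coboundary_image_insert, ?_⟩
      rw [loc_coboundary_image_insert X 0 (by simp)]
      exact filter_true_of_mem fun τ _ => by simp [powersetCard_zero, filter_singleton]
  | succ k =>
    obtain ⟨β, hβ, rfl⟩ := hγ
    have hvβ : ∀ b ∈ β, v ∉ b := fun b hb => (mem_faces_link.mp (hβ hb)).1
    refine ⟨coboundary X (k + 1) (β.image (insert v)), ⟨_, ?_, rfl⟩,
      fun σ => mem_of_mem_coboundary_image_insert, loc_coboundary_image_insert X (k + 1) hvβ⟩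
    exact image_subset_iff.mpr fun b hb => (mem_faces_link.mp (hβ hb)).2

lemma IsMinimal.loc_link {X : Finset (Finset V)} {e j : ℕ} {α : Finset (Finset V)}
    (hα : IsMinimal X (e + 1) (j + 1) α) {v : V} (hv : {v} ∈ X) (hje : j ≤ e)
    (hm : (faces (link X v) e).Nonempty) : IsMinimal (link X v) e j (loc α v) := by
  intro γ hγ
  obtain ⟨Γ, hΓ, hvΓ, rfl⟩ := exists_coboundary_loc_eq hv hγ
  have hoff : (symmDiff α Γ).filter (v ∉ ·) = α.filter (v ∉ ·) := by
    ext σ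
    simp only [mem_filter, mem_symmDiff]
    have := hvΓ σ
    tauto
  have hglobal := hα Γ hΓ
  rw [cnorm_eq_add_linkScale_mul v hje hm, cnorm_eq_add_linkScale_mul v hje hm, hoff,
    loc_symmDiff] at hglobal
  exact le_of_mul_le_mul_left (le_of_add_le_add_left hglobal) (linkScale_pos hje hm)

end LocalMinimality

theorem stmt_6_general {V : Type*} [DecidableEq V]
    (X : Finset (Finset V)) (d i : ℕ) (hi : 1 ≤ i) (hid : i ≤ d)
    (hpure : IsPure X d)
    (hvert : ∀ v : V, {v} ∈ X)
    (α : Finset (Finset V)) (hα : α ⊆ faces X i) :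
    ∃ α' ⊆ faces X i, LocallyMinimal X d i α' ∧
      (∃ γ : Finset (Finset V), IsCoboundarySet X i γ ∧ α' = symmDiff α γ) ∧
      cnorm X d i α' ≤ cnorm X d i α := by
  obtain ⟨γ, hγ, hsub, hmin⟩ := exists_isMinimal_symmDiff X d i hα
  refine ⟨symmDiff α γ, hsub, fun v => ?_, ⟨γ, hγ, rfl⟩, ?_⟩
  · obtain ⟨j, rfl⟩ : ∃ j, i = j + 1 := ⟨i - 1, by omega⟩
    obtain ⟨e, rfl⟩ : ∃ e, d = e + 1 := ⟨d - 1, by omega⟩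
    exact hmin.loc_link (hvert v) (by omega) (faces_link_nonempty hpure (hvert v))
  · simpa using hmin γ hγ

/-- For every `α ∈ C^i(X,F₂)` on a finite pure `d`-dimensional homogeneous
simplicial complex `X` there is a locally minimal `α′` with `α′ ≡ α (mod B^i(X,F₂))` and
`‖α′‖ ≤ ‖α‖`. -/
theorem stmt_6 {V : Type*} [Fintype V] [DecidableEq V]
    (X : Finset (Finset V)) (d i : ℕ) (hd : 1 ≤ d) (hi : 1 ≤ i) (hid : i ≤ d)
    (hcpx : IsComplex X) (hpure : IsPure X d)
    (hvert : ∀ v : V, {v} ∈ X)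
    (hhom : ∃ m : ℕ, ∀ v : V, (faces (link X v) (d - 1)).card = m)
    (α : Finset (Finset V)) (hα : α ⊆ faces X i) :
    ∃ α' ⊆ faces X i, LocallyMinimal X d i α' ∧
      (∃ γ : Finset (Finset V), IsCoboundarySet X i γ ∧ α' = symmDiff α γ) ∧
      cnorm X d i α' ≤ cnorm X d i α :=
  stmt_6_general X d i hi hid hpure hvert α hα
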